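/- Let E = Π_{i=1}^N E_i be a product of Euclidean spaces with norm ‖x‖² = Σ_i ‖x_i‖², let f : E → ℝ be differentiable with L-Lipschitz gradient, let g(x) = Σ_i g_i(x_i) with each g_i continuous, set F = f + g, and suppose F is bounded below with inf F = F* > −∞. Let a = (m − ε̄L)/(2ε̄) with 0 < ε̄ < m/L. Suppose (Kᵏ) is a sequence of differentiable m-strongly convex functions with Bregman distances Dᵏ, (εᵏ) satisfies 0 < ε̲ ≤ εᵏ ≤ ε̄, (i(k)) is any sequence of indices in {1,…,N}, and the sequence (xᵏ) satisfies: x^{k+1} globally minimizes y ↦ ⟨(∇f(xᵏ))_{i(k)}, y_{i(k)} − (xᵏ)_{i(k)}⟩ + g_{i(k)}(y_{i(k)}) + (1/εᵏ)Dᵏ(xᵏ, y) over E and (x^{k+1})_j = (xᵏ)_j for all j ≠ i(k). Then: (i) F(xᵏ) − F(x^{k+1}) ≥ a‖xᵏ − x^{k+1}‖² for all k; (ii) the sequence F(xᵏ) converges; (iii) Σ_{k=0}^∞ ‖xᵏ − x^{k+1}‖² ≤ (F(x⁰) − F*)/a, and hence ‖xᵏ − x^{k+1}‖ → 0. -/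

import Mathlib

open RealInnerProductSpace Filter Topology

section Aux

variable {G : Type*} [NormedAddCommGroup G] [InnerProductSpace ℝ G] [CompleteSpace G]

lemma line_hasDerivAt (f : G → ℝ) (f' : G → G) (hf : ∀ x, HasGradientAt f (f' x) x)
    (u d : G) (t : ℝ) :
    HasDerivAt (fun s : ℝ => f (u + s • d)) ⟪f' (u + t • d), d⟫ t := by
  have hc : HasDerivAt (fun s : ℝ => u + s • d) d t := by
    simpa using ((hasDerivAt_id t).smul_const d).const_add u
  have := ((hf (u + t • d)).hasFDerivAt.comp_hasDerivAt t hc)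
  have h2 := this
  simp at h2
  exact h2

lemma convex1d_le {ψ : ℝ → ℝ} {ψ' : ℝ} (hψ : ConvexOn ℝ Set.univ ψ)
    (hd : HasDerivAt ψ ψ' 0) : ψ 0 + ψ' ≤ ψ 1 := by
  have hslope : Tendsto (slope ψ 0) (𝓝[>] (0:ℝ)) (𝓝 ψ') :=
    (hasDerivAt_iff_tendsto_slope.1 hd).mono_left
      (nhdsWithin_mono _ (by intro s hs; exact ne_of_gt hs))
  have hev : ∀ᶠ s in 𝓝[>] (0:ℝ), slope ψ 0 s ≤ ψ 1 - ψ 0 := by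
    filter_upwards [Ioc_mem_nhdsGT_of_mem (Set.mem_Ico.2 ⟨le_refl (0:ℝ), one_pos⟩)]
      with s hs
    obtain ⟨hs0, hs1⟩ := hs
    have hcomb := hψ.2 (Set.mem_univ (0:ℝ)) (Set.mem_univ (1:ℝ))
      (show (0:ℝ) ≤ 1 - s by linarith) (show (0:ℝ) ≤ s from hs0.le)
      (show (1 - s) + s = 1 by ring)
    simp only [smul_eq_mul, mul_zero, mul_one, zero_add] at hcomb
    rw [slope_def_field, div_le_iff₀ (by linarith : (0:ℝ) < s - 0)]
    nlinarith
  have := le_of_tendsto hslope hev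
  linarith

lemma bregman_lb (Kf : G → ℝ) (Kf' : G → G) (hK : ∀ x, HasGradientAt Kf (Kf' x) x)
    (m : ℝ) (hKsc : ConvexOn ℝ Set.univ (fun x => Kf x - m / 2 * ‖x‖ ^ 2))
    (u v : G) : Kf u + ⟪Kf' u, v - u⟫ + m / 2 * ‖v - u‖ ^ 2 ≤ Kf v := by
  set d := v - u with hdd
  set ψ : ℝ → ℝ := fun s => Kf (u + s • d) - m / 2 * ‖u + s • d‖ ^ 2 with hψdef
  have hnorm : ∀ s : ℝ, ‖u + s • d‖ ^ 2 = ‖u‖ ^ 2 + 2 * ⟪u, d⟫ * s + ‖d‖ ^ 2 * s ^ 2 := by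
    intro s
    rw [norm_add_sq_real, real_inner_smul_right, norm_smul]
    simp [mul_pow]
    ring
  -- ψ is convex
  have hconv : ConvexOn ℝ Set.univ ψ := by
    have := hKsc.comp_affineMap (AffineMap.lineMap u v)
    have heq : (fun x => Kf x - m / 2 * ‖x‖ ^ 2) ∘ (AffineMap.lineMap u v) = ψ := by
      funext s
      have hl : AffineMap.lineMap u v s = u + s • d := by
        rw [AffineMap.lineMap_apply_module, hdd]
        module
      simp only [Function.comp_apply, hl, ψ]
    rw [heq] at this
    simpa using this
  -- derivative of ψ at 0
  have hd1 : HasDerivAt (fun s : ℝ => Kf (u + s • d)) ⟪Kf' (u + (0:ℝ) • d), d⟫ 0 :=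
    line_hasDerivAt Kf Kf' hK u d 0
  have hd2 : HasDerivAt (fun s : ℝ => m / 2 * ‖u + s • d‖ ^ 2)
      (m / 2 * (2 * ⟪u, d⟫)) 0 := by
    have hpoly : HasDerivAt (fun s : ℝ => ‖u‖ ^ 2 + 2 * ⟪u, d⟫ * s + ‖d‖ ^ 2 * s ^ 2)
        (2 * ⟪u, d⟫ + ‖d‖ ^ 2 * (2 * 0)) 0 := by
      have h1 : HasDerivAt (fun s : ℝ => 2 * ⟪u, d⟫ * s) (2 * ⟪u, d⟫) 0 := by
        simpa using (hasDerivAt_id (0:ℝ)).const_mul (2 * ⟪u, d⟫)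
      have h2 : HasDerivAt (fun s : ℝ => ‖d‖ ^ 2 * s ^ 2) (‖d‖ ^ 2 * (2 * 0)) 0 := by
        have := (hasDerivAt_pow 2 (0:ℝ)).const_mul (‖d‖ ^ 2)
        simpa using this
      simpa [← add_assoc] using (h1.add h2).const_add (‖u‖ ^ 2)
    have : HasDerivAt (fun s : ℝ => m / 2 * (‖u‖ ^ 2 + 2 * ⟪u, d⟫ * s + ‖d‖ ^ 2 * s ^ 2))
        (m / 2 * (2 * ⟪u, d⟫ + ‖d‖ ^ 2 * (2 * 0))) 0 := hpoly.const_mul (m / 2)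
    simp only [mul_zero, add_zero] at this
    convert this using 2 with s
    rw [hnorm s]
  have hdψ : HasDerivAt ψ (⟪Kf' u, d⟫ - m * ⟪u, d⟫) 0 := by
    have := hd1.sub hd2
    simp only [zero_smul, add_zero] at this
    refine this.congr_deriv ?_
    ring
  have := convex1d_le hconv hdψ
  simp only [ψ, zero_smul, one_smul, add_zero] at this
  have hvd : u + d = v := by rw [hdd]; abel
  rw [hvd] at this
  have hexp : ‖v - u‖ ^ 2 = ‖v‖ ^ 2 - 2 * ⟪u, v - u⟫ - ‖u‖ ^ 2 := by
    rw [norm_sub_sq_real, inner_sub_right, real_inner_self_eq_norm_sq]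
    rw [real_inner_comm v u]
    ring
  rw [hexp]
  linarith [this]

lemma descent_lemma (f : G → ℝ) (f' : G → G) (hf : ∀ x, HasGradientAt f (f' x) x)
    (L : ℝ) (hL : 0 ≤ L) (hflip : ∀ u v, ‖f' u - f' v‖ ≤ L * ‖u - v‖)
    (u v : G) : f v ≤ f u + ⟪f' u, v - u⟫ + L / 2 * ‖v - u‖ ^ 2 := by
  set d := v - u with hdd
  set φ : ℝ → ℝ := fun t => f (u + t • d) - t * ⟪f' u, d⟫ - L / 2 * t ^ 2 * ‖d‖ ^ 2 with hφdef
  have hder : ∀ t : ℝ, HasDerivAt φ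
      (⟪f' (u + t • d), d⟫ - ⟪f' u, d⟫ - L / 2 * (2 * t) * ‖d‖ ^ 2) t := by
    intro t
    have h1 := line_hasDerivAt f f' hf u d t
    have h2 : HasDerivAt (fun t : ℝ => t * ⟪f' u, d⟫) ⟪f' u, d⟫ t := by
      simpa using (hasDerivAt_id t).mul_const ⟪f' u, d⟫
    have h3 : HasDerivAt (fun t : ℝ => L / 2 * t ^ 2 * ‖d‖ ^ 2)
        (L / 2 * (2 * t) * ‖d‖ ^ 2) t := by
      have := ((hasDerivAt_pow 2 t).const_mul (L / 2)).mul_const (‖d‖ ^ 2)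
      simpa [mul_comm, mul_assoc, mul_left_comm] using this
    exact (h1.sub h2).sub h3
  have hmono : AntitoneOn φ (Set.Icc 0 1) := by
    apply antitoneOn_of_deriv_nonpos (convex_Icc 0 1)
    · exact (Continuous.continuousOn (by
        apply continuous_iff_continuousAt.2
        intro t
        exact (hder t).differentiableAt.continuousAt))
    · intro t ht
      exact (hder t).differentiableAt.differentiableWithinAt
    · intro t ht
      rw [interior_Icc] at ht
      rw [(hder t).deriv]
      have hip : ⟪f' (u + t • d) - f' u, d⟫ ≤ L * t * ‖d‖ ^ 2 := by
        calc ⟪f' (u + t • d) - f' u, d⟫ ≤ ‖f' (u + t • d) - f' u‖ * ‖d‖ :=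
              real_inner_le_norm _ _
          _ ≤ (L * ‖u + t • d - u‖) * ‖d‖ := by
              apply mul_le_mul_of_nonneg_right _ (norm_nonneg d)
              exact hflip _ _
          _ = L * t * ‖d‖ ^ 2 := by
              rw [add_sub_cancel_left, norm_smul, Real.norm_eq_abs,
                abs_of_pos ht.1]
              ring
      rw [inner_sub_left] at hip
      nlinarith [ht.1.le]
  have h01 := hmono (Set.mem_Icc.2 ⟨le_refl (0:ℝ), zero_le_one⟩)
    (Set.mem_Icc.2 ⟨zero_le_one, le_refl (1:ℝ)⟩) zero_le_one
  have hvd : u + (1:ℝ) • d = v := by rw [hdd]; simp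
  simp only [φ, zero_smul, add_zero, zero_mul, sub_zero, hvd, one_pow, one_mul,
    mul_one] at h01
  nlinarith [h01]

end Aux

/-- basic properties of any realization of the VBSCD iteration:
(i) sufficient decrease, (ii) convergence of the objective values,
(iii) square-summability of the steps with explicit bound, hence steps tend to zero. -/
theorem stmt_11 {N : ℕ} (E : Fin N → Type*)
    [∀ i, NormedAddCommGroup (E i)] [∀ i, InnerProductSpace ℝ (E i)]
    [∀ i, FiniteDimensional ℝ (E i)]
    (f : PiLp 2 E → ℝ) (f' : PiLp 2 E → PiLp 2 E)
    (g : ∀ i, E i → ℝ)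
    (L m εlow εbar : ℝ)
    (hf : ∀ x, HasGradientAt f (f' x) x)
    (hflip : ∀ u v, ‖f' u - f' v‖ ≤ L * ‖u - v‖)
    (hg : ∀ i, Continuous (g i))
    (F : PiLp 2 E → ℝ) (hF : ∀ u, F u = f u + ∑ i, g i (u i))
    (Fstar : ℝ) (hFstar : IsGLB (Set.range F) Fstar)
    (a : ℝ) (ha : a = (m - εbar * L) / (2 * εbar))
    (hεbar : 0 < εbar) (hεbarm : εbar < m / L)
    (K : ℕ → PiLp 2 E → ℝ) (K' : ℕ → PiLp 2 E → PiLp 2 E)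
    (hK : ∀ k x, HasGradientAt (K k) (K' k x) x)
    (hKsc : ∀ k, ConvexOn ℝ Set.univ (fun x => K k x - m / 2 * ‖x‖ ^ 2))
    (D : ℕ → PiLp 2 E → PiLp 2 E → ℝ)
    (hD : ∀ k u v, D k u v = K k v - (K k u + ⟪K' k u, v - u⟫))
    (ε : ℕ → ℝ) (hεlow : 0 < εlow) (hε : ∀ k, εlow ≤ ε k ∧ ε k ≤ εbar)
    (idx : ℕ → Fin N)
    (x : ℕ → PiLp 2 E)
    (hmin : ∀ k, ∀ y : PiLp 2 E,
      ⟪f' (x k) (idx k), (x (k + 1)) (idx k) - (x k) (idx k)⟫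
          + g (idx k) ((x (k + 1)) (idx k)) + (1 / ε k) * D k (x k) (x (k + 1))
        ≤ ⟪f' (x k) (idx k), y (idx k) - (x k) (idx k)⟫
          + g (idx k) (y (idx k)) + (1 / ε k) * D k (x k) y)
    (hfix : ∀ k, ∀ j, j ≠ idx k → (x (k + 1)) j = (x k) j) :
    (∀ k, F (x k) - F (x (k + 1)) ≥ a * ‖x k - x (k + 1)‖ ^ 2)
    ∧ (∃ l : ℝ, Tendsto (fun k => F (x k)) atTop (nhds l))
    ∧ (∀ K₀ : ℕ, ∑ k ∈ Finset.range K₀, ‖x k - x (k + 1)‖ ^ 2 ≤ (F (x 0) - Fstar) / a)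
    ∧ Tendsto (fun k => ‖x k - x (k + 1)‖) atTop (nhds 0) := by
  have hFlow : ∀ u, Fstar ≤ F u := fun u => hFstar.1 (Set.mem_range_self u)
  rcases subsingleton_or_nontrivial (PiLp 2 E) with hsub | hnt
  · -- trivial case: the space is a subsingleton
    have hx : ∀ k, x k = x 0 := fun k => Subsingleton.elim _ _
    have hnorm : ∀ k, ‖x k - x (k + 1)‖ = 0 := by
      intro k; rw [Subsingleton.elim (x k - x (k + 1)) 0, norm_zero]
    have hFst : Fstar = F (x 0) := by
      refine le_antisymm (hFlow _) (hFstar.2 ?_)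
      rintro r ⟨u, rfl⟩
      rw [Subsingleton.elim u (x 0)]
    refine ⟨?_, ⟨F (x 0), ?_⟩, ?_, ?_⟩
    · intro k
      rw [hx k, hx (k + 1)]
      simp
    · have : (fun k => F (x k)) = fun _ => F (x 0) := funext fun k => by rw [hx k]
      rw [this]; exact tendsto_const_nhds
    · intro K₀
      have : ∀ k ∈ Finset.range K₀, ‖x k - x (k + 1)‖ ^ 2 = 0 := by
        intro k _; rw [hnorm k]; ring
      rw [Finset.sum_congr rfl this, Finset.sum_const, ← hFst]
      simp
    · have : (fun k => ‖x k - x (k + 1)‖) = fun _ => (0:ℝ) := funext fun k => hnorm k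
      rw [this]; exact tendsto_const_nhds
  · -- nontrivial case
    obtain ⟨u₀, v₀, huv⟩ := exists_pair_ne (PiLp 2 E)
    have hL0 : 0 ≤ L := by
      have h1 : (0:ℝ) ≤ ‖f' u₀ - f' v₀‖ := norm_nonneg _
      have h2 := hflip u₀ v₀
      have h3 : (0:ℝ) < ‖u₀ - v₀‖ := by
        rw [norm_pos_iff]; exact sub_ne_zero_of_ne huv
      nlinarith
    have hLpos : 0 < L := by
      rcases hL0.lt_or_eq with h | h
      · exact h
      · exfalso; rw [← h] at hεbarm; simp at hεbarm; linarith
    have hmL : εbar * L < m := by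
      rwa [lt_div_iff₀ hLpos] at hεbarm
    have hmpos : 0 < m := lt_trans (by positivity) hmL
    have hapos : 0 < a := by
      rw [ha]; apply div_pos <;> linarith
    -- (i) sufficient decrease
    have key : ∀ k, F (x k) - F (x (k + 1)) ≥ a * ‖x k - x (k + 1)‖ ^ 2 := by
      intro k
      have hεk := hε k
      have hεkpos : 0 < ε k := lt_of_lt_of_le hεlow hεk.1
      -- inner product reduces to block i
      have hinner : ⟪f' (x k), x (k + 1) - x k⟫
          = ⟪f' (x k) (idx k), (x (k + 1)) (idx k) - (x k) (idx k)⟫ := by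
        rw [PiLp.inner_apply]
        rw [Finset.sum_eq_single (idx k)]
        · simp
        · intro j _ hj
          have : (x (k + 1)) j = (x k) j := hfix k j hj
          simp [this]
        · intro h; exact absurd (Finset.mem_univ (idx k)) h
      -- g-sum difference reduces to block i
      have hgsum : (∑ j, g j ((x (k + 1)) j)) - (∑ j, g j ((x k) j))
          = g (idx k) ((x (k + 1)) (idx k)) - g (idx k) ((x k) (idx k)) := by
        rw [← Finset.sum_sub_distrib]
        rw [Finset.sum_eq_single (idx k)]
        · intro j _ hj
          rw [hfix k j hj, sub_self]
        · intro h; exact absurd (Finset.mem_univ (idx k)) h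
      -- the minimization property at y = x k
      have hDkk : D k (x k) (x k) = 0 := by rw [hD]; simp
      have hmin' := hmin k (x k)
      rw [hDkk] at hmin'
      simp only [sub_self, inner_zero_right, mul_zero, zero_add, add_zero] at hmin'
      -- Bregman lower bound
      have hDlb : m / 2 * ‖x (k + 1) - x k‖ ^ 2 ≤ D k (x k) (x (k + 1)) := by
        have := bregman_lb (K k) (K' k) (hK k) m (hKsc k) (x k) (x (k + 1))
        rw [hD]
        linarith
      -- descent lemma
      have hdesc := descent_lemma f f' hf L hL0 hflip (x k) (x (k + 1))
      rw [hinner] at hdesc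
      -- put everything together
      have hnormrev : ‖x k - x (k + 1)‖ = ‖x (k + 1) - x k‖ := norm_sub_rev _ _
      have hDnn : 0 ≤ D k (x k) (x (k + 1)) := le_trans (by positivity) hDlb
      have hstep : (1 / εbar) * (m / 2 * ‖x (k + 1) - x k‖ ^ 2)
          ≤ (1 / ε k) * D k (x k) (x (k + 1)) := by
        have h1 : (1 / εbar) ≤ 1 / ε k := by
          apply one_div_le_one_div_of_le hεkpos hεk.2
        calc (1 / εbar) * (m / 2 * ‖x (k + 1) - x k‖ ^ 2)
            ≤ (1 / ε k) * (m / 2 * ‖x (k + 1) - x k‖ ^ 2) := by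
              apply mul_le_mul_of_nonneg_right h1 (by positivity)
          _ ≤ (1 / ε k) * D k (x k) (x (k + 1)) := by
              apply mul_le_mul_of_nonneg_left hDlb (by positivity)
      have hFk := hF (x k)
      have hFk1 := hF (x (k + 1))
      have hid : (1 / εbar) * (m / 2 * ‖x (k + 1) - x k‖ ^ 2)
          - L / 2 * ‖x (k + 1) - x k‖ ^ 2 = a * ‖x (k + 1) - x k‖ ^ 2 := by
        rw [ha]; field_simp
      rw [hFk, hFk1, hnormrev]
      linarith [hstep, hmin', hdesc, hgsum, hid]
    -- monotonicity
    have hanti : Antitone fun k => F (x k) := by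
      apply antitone_nat_of_succ_le
      intro k
      have := key k
      nlinarith [sq_nonneg ‖x k - x (k + 1)‖]
    refine ⟨key, ?_, ?_, ?_⟩
    · -- (ii) convergence of values
      refine ⟨⨅ k, F (x k), tendsto_atTop_ciInf hanti ⟨Fstar, ?_⟩⟩
      rintro r ⟨k, rfl⟩
      exact hFlow _
    · -- (iii) the explicit bound
      intro K₀
      have hsum : a * ∑ k ∈ Finset.range K₀, ‖x k - x (k + 1)‖ ^ 2 ≤ F (x 0) - Fstar := by
        rw [Finset.mul_sum]
        calc ∑ k ∈ Finset.range K₀, a * ‖x k - x (k + 1)‖ ^ 2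
            ≤ ∑ k ∈ Finset.range K₀, (F (x k) - F (x (k + 1))) :=
              Finset.sum_le_sum fun k _ => key k
          _ = F (x 0) - F (x K₀) := Finset.sum_range_sub' (fun k => F (x k)) K₀
          _ ≤ F (x 0) - Fstar := by linarith [hFlow (x K₀)]
      rw [le_div_iff₀ hapos, mul_comm]
      exact hsum
    · -- (iv) steps tend to zero
      have hsummable : Summable fun k => ‖x k - x (k + 1)‖ ^ 2 := by
        apply summable_of_sum_range_le (c := (F (x 0) - Fstar) / a)
          (fun k => sq_nonneg _)
        intro n
        have hsum : a * ∑ k ∈ Finset.range n, ‖x k - x (k + 1)‖ ^ 2 ≤ F (x 0) - Fstar := by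
          rw [Finset.mul_sum]
          calc ∑ k ∈ Finset.range n, a * ‖x k - x (k + 1)‖ ^ 2
              ≤ ∑ k ∈ Finset.range n, (F (x k) - F (x (k + 1))) :=
                Finset.sum_le_sum fun k _ => key k
            _ = F (x 0) - F (x n) := Finset.sum_range_sub' (fun k => F (x k)) n
            _ ≤ F (x 0) - Fstar := by linarith [hFlow (x n)]
        rw [le_div_iff₀ hapos, mul_comm]
        exact hsum
      have hsq : Tendsto (fun k => ‖x k - x (k + 1)‖ ^ 2) atTop (nhds 0) :=
        hsummable.tendsto_atTop_zero
      have heq : (fun k => ‖x k - x (k + 1)‖)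
          = fun k => Real.sqrt (‖x k - x (k + 1)‖ ^ 2) :=
        funext fun k => (Real.sqrt_sq (norm_nonneg _)).symm
      rw [heq]
      exact (Real.continuous_sqrt.tendsto' 0 0 Real.sqrt_zero).comp hsq
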